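/- With α₊ = ∫₁^∞ dx/√(x³−1) and α₋ = ∫_{−1}^∞ dx/√(x³+1), one has α₋ = √3 · α₊. -/

import Mathlib

/-!
The map `x ↦ u = x + 4 / x²` is the `x`-coordinate of a 3-isogeny from `y² = x³ + 1` to
`v² = u³ - 27`: indeed `u³ - 27 = (x³ + 1) ((x³ - 8) / x³)²` and `du = (x³ - 8) / x³ dx`, so
`dx / √(x³ + 1) = ± du / √(u³ - 27)`. On `x > -1` the map has a pole at `0` and a critical point
at `2`, and each of the three resulting branches maps bijectively onto `u > 3`. Hence
`α₋ = 3 ∫₃^∞ du / √(u³ - 27)`, and the substitution `u = 3t` turns this into `(3 / √3) α₊`.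
Everything is done with lower Lebesgue integrals, so no convergence argument is needed.
-/

open MeasureTheory Set Filter Topology
open scoped ENNReal

theorem injOn_of_hasDerivWithinAt_ne_zero {s : Set ℝ} {f f' : ℝ → ℝ} (hs : Convex ℝ s)
    (hf : ∀ x ∈ s, HasDerivWithinAt f (f' x) s x) (hf' : ∀ x ∈ s, f' x ≠ 0) : InjOn f s := by
  have hcont : ContinuousOn f s := fun x hx => (hf x hx).continuousWithinAt
  have hint : ∀ x ∈ interior s, HasDerivWithinAt f (f' x) (interior s) x := fun x hx =>
    (hf x (interior_subset hx)).mono interior_subset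
  rcases hasDerivWithinAt_forall_lt_or_forall_gt_of_forall_ne hs hf hf' with hneg | hpos
  · exact (strictAntiOn_of_hasDerivWithinAt_neg hs hcont hint
      fun x hx => hneg x (interior_subset hx)).injOn
  · exact (strictMonoOn_of_hasDerivWithinAt_pos hs hcont hint
      fun x hx => hpos x (interior_subset hx)).injOn

theorem setLIntegral_Ioi_eq_add_add {μ : Measure ℝ} [NullSingletonClass μ] {f : ℝ → ℝ≥0∞}
    {a b c : ℝ} (hab : a ≤ b) (hbc : b ≤ c) :
    ∫⁻ x in Ioi a, f x ∂μ
      = ∫⁻ x in Ioo a b, f x ∂μ + ∫⁻ x in Ioo b c, f x ∂μ + ∫⁻ x in Ioi c, f x ∂μ := by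
  rw [← Ioc_union_Ioi_eq_Ioi hab, lintegral_union measurableSet_Ioi Ioc_disjoint_Ioi_same,
    ← Ioc_union_Ioi_eq_Ioi hbc, lintegral_union measurableSet_Ioi Ioc_disjoint_Ioi_same,
    setLIntegral_congr Ioo_ae_eq_Ioc.symm, setLIntegral_congr (Ioo_ae_eq_Ioc (b := c)).symm,
    add_assoc]

theorem setLIntegral_Ioi_inv_sqrt_cube_sub_cube {c : ℝ} (hc : 0 < c) :
    ∫⁻ x in Ioi c, ENNReal.ofReal (1 / √(x ^ 3 - c ^ 3))
      = ENNReal.ofReal (√c)⁻¹ * ∫⁻ x in Ioi 1, ENNReal.ofReal (1 / √(x ^ 3 - 1)) := by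
  have hderiv : ∀ x ∈ Ioi (1 : ℝ), HasDerivWithinAt (c * ·) c (Ioi 1) x := fun x _ => by
    simpa using ((hasDerivAt_id x).const_mul c).hasDerivWithinAt
  rw [← mul_one c, ← image_mul_left_Ioi hc, mul_one,
    lintegral_image_eq_lintegral_abs_deriv_mul measurableSet_Ioi hderiv
      (mul_right_injective₀ hc.ne').injOn,
    ← lintegral_const_mul' _ _ ENNReal.ofReal_ne_top]
  refine lintegral_congr fun x => ?_
  have hsqrt : √((c * x) ^ 3 - c ^ 3) = c * √c * √(x ^ 3 - 1) := by
    rw [show (c * x) ^ 3 - c ^ 3 = c ^ 3 * (x ^ 3 - 1) by ring, Real.sqrt_mul (by positivity),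
      show c ^ 3 = c ^ 2 * c by ring, Real.sqrt_mul (by positivity), Real.sqrt_sq hc.le]
  have hc' : 0 < √c := Real.sqrt_pos.mpr hc
  rw [← ENNReal.ofReal_mul (abs_nonneg _), ← ENNReal.ofReal_mul (by positivity), hsqrt,
    abs_of_pos hc]
  congr 1
  field_simp

noncomputable def isogeny3 (x : ℝ) : ℝ := x + 4 / x ^ 2

theorem hasDerivAt_isogeny3 {x : ℝ} (hx : x ≠ 0) :
    HasDerivAt isogeny3 ((x ^ 3 - 8) / x ^ 3) x := by
  have h := (hasDerivAt_id x).add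
    ((hasDerivAt_const x (4 : ℝ)).div (hasDerivAt_pow 2 x) (pow_ne_zero 2 hx))
  refine h.congr_deriv ?_
  field_simp
  ring

theorem cube_sub_eight_div_cube_ne_zero {x : ℝ} (hx₀ : x ≠ 0) (hx₂ : x ≠ 2) :
    (x ^ 3 - 8) / x ^ 3 ≠ 0 := by
  have h : x ^ 3 ≠ 2 ^ 3 := (Odd.strictMono_pow (R := ℝ) (by decide : Odd 3)).injective.ne hx₂
  norm_num at h
  exact div_ne_zero (sub_ne_zero.mpr h) (pow_ne_zero 3 hx₀)

theorem continuousOn_isogeny3 : ContinuousOn isogeny3 {0}ᶜ := fun _ hx =>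
  (hasDerivAt_isogeny3 hx).continuousAt.continuousWithinAt

theorem isogeny3_sub_three {x : ℝ} (hx : x ≠ 0) :
    isogeny3 x - 3 = (x + 1) * (x - 2) ^ 2 / x ^ 2 := by
  unfold isogeny3
  field_simp
  ring

theorem isogeny3_cube_sub_cube {x : ℝ} (hx : x ≠ 0) :
    isogeny3 x ^ 3 - 3 ^ 3 = (x ^ 3 + 1) * ((x ^ 3 - 8) / x ^ 3) ^ 2 := by
  unfold isogeny3
  field_simp
  ring

theorem three_lt_isogeny3 {x : ℝ} (hx₁ : -1 < x) (hx₀ : x ≠ 0) (hx₂ : x ≠ 2) :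
    3 < isogeny3 x := by
  have : 0 < (x + 1) * (x - 2) ^ 2 / x ^ 2 := by
    have : x - 2 ≠ 0 := sub_ne_zero.mpr hx₂
    have : 0 < x + 1 := by linarith
    positivity
  linarith [isogeny3_sub_three hx₀]

theorem tendsto_isogeny3_nhdsNE_zero : Tendsto isogeny3 (𝓝[≠] 0) atTop := by
  have h : Tendsto (fun x : ℝ => 4 * ‖x⁻¹‖ ^ 2) (𝓝[≠] 0) atTop :=
    ((tendsto_pow_atTop two_ne_zero).comp tendsto_norm_inv_nhdsNE_zero_atTop).const_mul_atTop
      (by norm_num)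
  refine (tendsto_nhdsWithin_of_tendsto_nhds tendsto_id).add_atTop (h.congr fun x => ?_)
  simp [div_eq_mul_inv]

theorem tendsto_isogeny3_atTop : Tendsto isogeny3 atTop atTop :=
  tendsto_atTop_mono (fun x => le_add_of_nonneg_right (by positivity)) tendsto_id

theorem image_isogeny3_eq_Ioi {s : Set ℝ} (hs : IsPreconnected s) (hsub : s ⊆ Ioi (-1) \ {0, 2})
    {l₁ l₂ : Filter ℝ} [l₁.NeBot] [l₂.NeBot] (hl₁ : l₁ ≤ 𝓟 s) (hl₂ : l₂ ≤ 𝓟 s)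
    (h₁ : Tendsto isogeny3 l₁ (𝓝 3)) (h₂ : Tendsto isogeny3 l₂ atTop) :
    isogeny3 '' s = Ioi 3 := by
  refine Subset.antisymm ?_ (hs.intermediate_value_Ioi hl₁ hl₂ ?_ h₁ h₂)
  · rintro _ ⟨x, hx, rfl⟩
    obtain ⟨hx₁, hx₀₂⟩ := hsub hx
    simp only [mem_insert_iff, mem_singleton_iff, not_or] at hx₀₂
    exact three_lt_isogeny3 hx₁ hx₀₂.1 hx₀₂.2
  · exact continuousOn_isogeny3.mono fun x hx hx₀ => (hsub hx).2 (.inl hx₀)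

theorem tendsto_isogeny3_nhdsWithin_three {a : ℝ} (ha : a = -1 ∨ a = 2) (s : Set ℝ) :
    Tendsto isogeny3 (𝓝[s] a) (𝓝 3) := by
  have ha₀ : a ≠ 0 := by rcases ha with rfl | rfl <;> norm_num
  have h3 : isogeny3 a = 3 := by rcases ha with rfl | rfl <;> norm_num [isogeny3]
  exact h3 ▸ (hasDerivAt_isogeny3 ha₀).continuousAt.tendsto.mono_left nhdsWithin_le_nhds

theorem image_isogeny3_Ioo_neg_one_zero : isogeny3 '' Ioo (-1) 0 = Ioi 3 :=
  image_isogeny3_eq_Ioi isPreconnected_Ioo (fun _ _ => by grind)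
    (le_principal_iff.mpr (Ioo_mem_nhdsGT (by norm_num : (-1 : ℝ) < 0)))
    (le_principal_iff.mpr (Ioo_mem_nhdsLT (by norm_num : (-1 : ℝ) < 0)))
    (tendsto_isogeny3_nhdsWithin_three (.inl rfl) _)
    (tendsto_isogeny3_nhdsNE_zero.mono_left (nhdsWithin_mono _ fun _ hx => ne_of_lt hx))

theorem image_isogeny3_Ioo_zero_two : isogeny3 '' Ioo 0 2 = Ioi 3 :=
  image_isogeny3_eq_Ioi isPreconnected_Ioo (fun _ _ => by grind)
    (le_principal_iff.mpr (Ioo_mem_nhdsLT (by norm_num : (0 : ℝ) < 2)))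
    (le_principal_iff.mpr (Ioo_mem_nhdsGT (by norm_num : (0 : ℝ) < 2)))
    (tendsto_isogeny3_nhdsWithin_three (.inr rfl) _)
    (tendsto_isogeny3_nhdsNE_zero.mono_left (nhdsWithin_mono _ fun _ hx => ne_of_gt hx))

theorem image_isogeny3_Ioi_two : isogeny3 '' Ioi 2 = Ioi 3 :=
  image_isogeny3_eq_Ioi isPreconnected_Ioi (fun _ _ => by grind)
    (le_principal_iff.mpr self_mem_nhdsWithin) (le_principal_iff.mpr (Ioi_mem_atTop 2))
    (tendsto_isogeny3_nhdsWithin_three (.inr rfl) _) tendsto_isogeny3_atTop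

theorem abs_deriv_isogeny3_mul_inv_sqrt {x : ℝ} (hx₀ : x ≠ 0) (hx₂ : x ≠ 2) :
    |(x ^ 3 - 8) / x ^ 3| * (1 / √(isogeny3 x ^ 3 - 3 ^ 3)) = 1 / √(x ^ 3 + 1) := by
  have hq : |(x ^ 3 - 8) / x ^ 3| ≠ 0 :=
    abs_ne_zero.mpr (cube_sub_eight_div_cube_ne_zero hx₀ hx₂)
  rw [isogeny3_cube_sub_cube hx₀, Real.sqrt_mul' _ (sq_nonneg _), Real.sqrt_sq_eq_abs]
  by_cases hx : √(x ^ 3 + 1) = 0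
  · simp [hx]
  · field_simp

theorem setLIntegral_inv_sqrt_cube_add_one_eq {s : Set ℝ} (hs : MeasurableSet s)
    (hconv : Convex ℝ s) (hsub : s ⊆ {0, 2}ᶜ) (himg : isogeny3 '' s = Ioi 3) :
    ∫⁻ x in s, ENNReal.ofReal (1 / √(x ^ 3 + 1))
      = ∫⁻ u in Ioi 3, ENNReal.ofReal (1 / √(u ^ 3 - 3 ^ 3)) := by
  have hne : ∀ x ∈ s, x ≠ 0 ∧ x ≠ 2 := fun x hx => by simpa [not_or] using hsub hx
  have hderiv : ∀ x ∈ s, HasDerivWithinAt isogeny3 ((x ^ 3 - 8) / x ^ 3) s x := fun x hx =>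
    (hasDerivAt_isogeny3 (hne x hx).1).hasDerivWithinAt
  have hinj : InjOn isogeny3 s := injOn_of_hasDerivWithinAt_ne_zero hconv hderiv fun x hx =>
    cube_sub_eight_div_cube_ne_zero (hne x hx).1 (hne x hx).2
  rw [← himg, lintegral_image_eq_lintegral_abs_deriv_mul hs hderiv hinj]
  refine setLIntegral_congr_fun hs fun x hx => ?_
  rw [← ENNReal.ofReal_mul (abs_nonneg _),
    abs_deriv_isogeny3_mul_inv_sqrt (hne x hx).1 (hne x hx).2]

theorem stmt4 :
    (∫ x in Ioi (-1 : ℝ), 1 / Real.sqrt (x ^ 3 + 1))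
      = Real.sqrt 3 * ∫ x in Ioi (1 : ℝ), 1 / Real.sqrt (x ^ 3 - 1) := by
  have hthree : (√3)⁻¹ + (√3)⁻¹ + (√3)⁻¹ = √3 := by
    have h : √3 * √3 = 3 := Real.mul_self_sqrt (by norm_num)
    field_simp
    linarith
  have hlintegral : ∫⁻ x in Ioi (-1), ENNReal.ofReal (1 / √(x ^ 3 + 1))
      = ENNReal.ofReal √3 * ∫⁻ x in Ioi 1, ENNReal.ofReal (1 / √(x ^ 3 - 1)) := by
    rw [setLIntegral_Ioi_eq_add_add (by norm_num : (-1 : ℝ) ≤ 0) (by norm_num : (0 : ℝ) ≤ 2),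
      setLIntegral_inv_sqrt_cube_add_one_eq measurableSet_Ioo (convex_Ioo _ _)
        (fun _ _ => by grind) image_isogeny3_Ioo_neg_one_zero,
      setLIntegral_inv_sqrt_cube_add_one_eq measurableSet_Ioo (convex_Ioo _ _)
        (fun _ _ => by grind) image_isogeny3_Ioo_zero_two,
      setLIntegral_inv_sqrt_cube_add_one_eq measurableSet_Ioi (convex_Ioi _)
        (fun _ _ => by grind) image_isogeny3_Ioi_two,
      setLIntegral_Ioi_inv_sqrt_cube_sub_cube three_pos, ← add_mul, ← add_mul,
      ← ENNReal.ofReal_add (by positivity) (by positivity),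
      ← ENNReal.ofReal_add (by positivity) (by positivity), hthree]
  rw [integral_eq_lintegral_of_nonneg_ae (.of_forall fun _ => by positivity)
      (by fun_prop : Measurable _).aestronglyMeasurable,
    integral_eq_lintegral_of_nonneg_ae (.of_forall fun _ => by positivity)
      (by fun_prop : Measurable _).aestronglyMeasurable,
    hlintegral, ENNReal.toReal_mul, ENNReal.toReal_ofReal (Real.sqrt_nonneg 3)]
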